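/- Define the sequence (v_k) of positive integers by v_1 = 1 and v_{k+1} = v_k if 2 v_k > u_{k+1}, and v_{k+1} = ⌊u_{k+1}/v_k⌋ · v_k otherwise, where (u_k) is a nondecreasing unbounded sequence of positive reals. Then for every k ≥ 1, u_k / 2 ≤ v_k implies u_{k+1}/2 ≤ v_{k+1}; in particular v_k ≥ u_k/2 for all k with v_{k-1} defined, and v_k → +∞. -/

import Mathlib

/-!
Either `2 v_k > u_{k+1}` and `v_k` itself already exceeds `u_{k+1} / 2`, or `y := u_{k+1} / v_k ≥ 2`
and then `⌊y⌋ v_k > (y / 2) v_k = u_{k+1} / 2`. Divergence follows by comparison with `u_k / 2`.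
-/

open Filter

noncomputable def trackStep (x : ℝ) (n : ℕ) : ℕ :=
  if 2 * (n : ℝ) > x then n else ⌊x / (n : ℝ)⌋₊ * n

lemma half_lt_floor_div_mul {x : ℝ} {n : ℕ} (hn : 0 < n) (h : (n : ℝ) ≤ x) :
    x / 2 < (⌊x / n⌋₊ * n : ℕ) := by
  have hn' : (0 : ℝ) < n := by exact_mod_cast hn
  have hlt : x / n / 2 < ⌊x / n⌋₊ := Nat.div_two_lt_floor ((one_le_div hn').mpr h)
  calc x / 2 = x / n / 2 * n := by field_simp
    _ < ⌊x / n⌋₊ * n := by gcongr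
    _ = (⌊x / n⌋₊ * n : ℕ) := by push_cast; ring

lemma half_le_trackStep {x : ℝ} {n : ℕ} (hn : 0 < n) : x / 2 ≤ trackStep x n := by
  unfold trackStep
  split_ifs with h
  · linarith
  · have hn' : (0 : ℝ) < n := by exact_mod_cast hn
    exact (half_lt_floor_div_mul hn (by linarith)).le

lemma trackStep_pos {x : ℝ} {n : ℕ} (hn : 0 < n) : 0 < trackStep x n := by
  unfold trackStep
  split_ifs with h
  · exact hn
  · have hn' : (0 : ℝ) < n := by exact_mod_cast hn
    exact_mod_cast (show (0 : ℝ) < (⌊x / n⌋₊ * n : ℕ) by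
      linarith [half_lt_floor_div_mul (x := x) hn (by linarith)])

theorem stmt3 (u : ℕ → ℝ)
    (hunb : Tendsto u atTop atTop) (v : ℕ → ℕ) (hv1 : v 0 = 1)
    (hrec : ∀ k, v (k + 1) =
      if 2 * (v k : ℝ) > u (k + 1) then v k else ⌊u (k + 1) / (v k : ℝ)⌋₊ * v k) :
    (∀ k, u k / 2 ≤ (v k : ℝ) → u (k + 1) / 2 ≤ (v (k + 1) : ℝ)) ∧
    (∀ k, u (k + 1) / 2 ≤ (v (k + 1) : ℝ)) ∧
    Tendsto (fun k => (v k : ℝ)) atTop atTop := by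
  have hstep : ∀ k, v (k + 1) = trackStep (u (k + 1)) (v k) := hrec
  have hvpos : ∀ k, 0 < v k := by
    intro k
    induction k with
    | zero => simp [hv1]
    | succ k ih => exact hstep k ▸ trackStep_pos ih
  have hhalf : ∀ k, u (k + 1) / 2 ≤ (v (k + 1) : ℝ) := fun k =>
    hstep k ▸ half_le_trackStep (hvpos k)
  refine ⟨fun k _ => hhalf k, hhalf, ?_⟩
  rw [← tendsto_add_atTop_iff_nat 1]
  exact tendsto_atTop_mono hhalf
    ((hunb.comp (tendsto_add_atTop_nat 1)).atTop_div_const two_pos)
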